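/- arXiv:2605.29444 — 5 statements merged into one kernel-verified Lean document; each statement's English description precedes it below -/
import Mathlib

section
/- Let F be a 2-CNF formula over n variables with m clauses C_1,…,C_m, each containing two literals on distinct variables, and let p_1,…,p_m ∈ ℝ^n be the corresponding reduction points. Suppose there is an assignment τ and a set R of at least r clause indices such that for each i ∈ R exactly one literal of C_i is true under τ. Then there exist w ∈ {−1, 1}^n and a bonus vector v : {1,…,m} → ℝ with at most m − r nonzero values, each nonzero value lying in {−2, 2}, such that ∑_{j=1}^n w_j·p_i[j] + v(i) = 0 for every i ∈ {1,…,m}. In particular, assigning bonus 0 to every zero point of the reduced dataset, all adjusted scores equal 0, so the adjusted scores are non-increasing along the ranking π of the reduction. -/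
/-- The position (0-indexed) of the clause point `p_i` in the ranking `π` of the
reduction: the dataset consists of `(m+1)·n²` zero points and `m` clause points,
listed as `n²` zeros, `p_1`, `n²` zeros, `p_2`, …, `p_m`, `n²` zeros. -/
def clauseIdx (n m : ℕ) (i : Fin m) : Fin ((m + 1) * n ^ 2 + m) :=
  ⟨((i : ℕ) + 1) * n ^ 2 + (i : ℕ), by
    have h1 : ((i : ℕ) + 1) * n ^ 2 ≤ (m + 1) * n ^ 2 :=
      Nat.mul_le_mul_right _ (Nat.succ_le_succ i.isLt.le)
    exact add_lt_add_of_le_of_lt h1 i.isLt⟩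

/-- The literal with sign `s ∈ {1, −1}` on a variable with truth value `b` is true:
a positive literal (`s = 1`) is true when `b = true`, a negated literal (`s = −1`)
is true when `b = false`. -/
def litTrue (s : ℝ) (b : Bool) : Prop :=
  (s = 1 ∧ b = true) ∨ (s = -1 ∧ b = false)

/-!
Take the weight `w_j = ±1` according to `τ(x_j)`. Then `w · p_i` is the sum of one `+1` for each
true literal of `C_i` and one `-1` for each false literal, so it is `0` exactly when one literal is
true and `±2` otherwise. The bonus `v_i = -(w · p_i)` makes every adjusted score `0`, and it
vanishes on the clauses of `R`.
-/

open Finset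

lemma clauseIdx_strictMono (n m : ℕ) : StrictMono (clauseIdx n m) := by
  intro a b hab
  have hab' : (a : ℕ) < b := hab
  show ((a : ℕ) + 1) * n ^ 2 + a < ((b : ℕ) + 1) * n ^ 2 + b
  exact Nat.add_lt_add_of_le_of_lt (Nat.mul_le_mul_right _ (by omega)) hab'

lemma sum_mul_ite_add_ite {ι R : Type*} [Fintype ι] [DecidableEq ι] [NonUnitalNonAssocSemiring R]
    (w : ι → R) (a b : ι) (s t : R) :
    ∑ j, w j * ((if j = a then s else 0) + (if j = b then t else 0)) = w a * s + w b * t := by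
  simp [mul_add, sum_add_distrib, mul_ite]

lemma ite_mul_eq_ite_litTrue (b : Bool) {s : ℝ} [Decidable (litTrue s b)] (hs : s = 1 ∨ s = -1) :
    (if b then 1 else -1) * s = if litTrue s b then 1 else -1 := by
  rcases hs with rfl | rfl <;> cases b <;> norm_num [litTrue]

lemma ite_add_ite_eq_zero_of_xor {P Q : Prop} [Decidable P] [Decidable Q] (h : Xor P Q) :
    (if P then 1 else -1 : ℝ) + (if Q then 1 else -1) = 0 := by
  rcases h with ⟨hP, hQ⟩ | ⟨hQ, hP⟩ <;> simp [hP, hQ]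

lemma neg_ite_add_ite_eq_two_or_neg_two {P Q : Prop} [Decidable P] [Decidable Q]
    (h : -((if P then 1 else -1 : ℝ) + (if Q then 1 else -1)) ≠ 0) :
    -((if P then 1 else -1 : ℝ) + (if Q then 1 else -1)) = 2 ∨
      -((if P then 1 else -1 : ℝ) + (if Q then 1 else -1)) = -2 := by
  split_ifs at h ⊢ <;> norm_num at h <;> norm_num

lemma sum_mul_add_extend_eq_zero {ι κ ν : Type*} [Fintype ν] {e : ι → κ}
    (he : Function.Injective e) {w : ν → ℝ} {p : ι → ν → ℝ} {v : ι → ℝ}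
    (hv : ∀ i, ∑ j, w j * p i j + v i = 0) {D : κ → ν → ℝ} (hD1 : ∀ i, D (e i) = p i)
    (hD2 : ∀ k, (∀ i, k ≠ e i) → D k = 0) (k : κ) :
    ∑ j, w j * D k j + Function.extend e v 0 k = 0 := by
  by_cases hk : ∃ i, e i = k
  · obtain ⟨i, rfl⟩ := hk
    rw [hD1, he.extend_apply, hv]
  · push Not at hk
    rw [hD2 k fun i => (hk i).symm, Function.extend_apply' _ _ _ (by simpa using hk)]
    simp

theorem stmt_1_general (n m r : ℕ)
    (va vb : Fin m → Fin n) (sa sb : Fin m → ℝ)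
    (hsa : ∀ i, sa i = 1 ∨ sa i = -1) (hsb : ∀ i, sb i = 1 ∨ sb i = -1)
    (p : Fin m → Fin n → ℝ)
    (hp : ∀ i j, p i j =
      (if j = va i then sa i else 0) + (if j = vb i then sb i else 0))
    (τ : Fin n → Bool) (R : Finset (Fin m)) (hR : r ≤ R.card)
    (hτ : ∀ i ∈ R, Xor' (litTrue (sa i) (τ (va i))) (litTrue (sb i) (τ (vb i))))
    (D : Fin ((m + 1) * n ^ 2 + m) → Fin n → ℝ)
    (hD1 : ∀ i, D (clauseIdx n m i) = p i)
    (hD2 : ∀ idx, (∀ i, idx ≠ clauseIdx n m i) → D idx = 0) :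
    ∃ w : Fin n → ℝ, (∀ j, w j = 1 ∨ w j = -1) ∧
      ∃ v : Fin m → ℝ,
        (Finset.univ.filter fun i => v i ≠ 0).card ≤ m - r ∧
        (∀ i, v i ≠ 0 → v i = 2 ∨ v i = -2) ∧
        (∀ i, (∑ j, w j * p i j) + v i = 0) ∧
        ∃ V : Fin ((m + 1) * n ^ 2 + m) → ℝ,
          (∀ i, V (clauseIdx n m i) = v i) ∧
          (∀ idx, (∀ i, idx ≠ clauseIdx n m i) → V idx = 0) ∧
          (∀ idx, (∑ j, w j * D idx j) + V idx = 0) ∧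
          ∀ idx idx' : Fin ((m + 1) * n ^ 2 + m), idx ≤ idx' →
            (∑ j, w j * D idx' j) + V idx' ≤ (∑ j, w j * D idx j) + V idx := by
  classical
  set w : Fin n → ℝ := fun j => if τ j then 1 else -1
  have hscore : ∀ i, ∑ j, w j * p i j =
      (if litTrue (sa i) (τ (va i)) then 1 else -1) +
        (if litTrue (sb i) (τ (vb i)) then 1 else -1) := fun i => by
    simp only [hp, sum_mul_ite_add_ite, w, ite_mul_eq_ite_litTrue _ (hsa i),
      ite_mul_eq_ite_litTrue _ (hsb i)]
  set v : Fin m → ℝ := fun i => -∑ j, w j * p i j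
  have hv : ∀ i, ∑ j, w j * p i j + v i = 0 := fun i => add_neg_cancel _
  have hsupport : (univ.filter fun i => v i ≠ 0) ⊆ Rᶜ := fun i hi => mem_compl.2 fun hiR => by
    simp only [mem_filter, v, hscore, ite_add_ite_eq_zero_of_xor (hτ i hiR)] at hi
    exact hi.2 neg_zero
  have hinj := (clauseIdx_strictMono n m).injective
  have hzero := sum_mul_add_extend_eq_zero hinj hv hD1 hD2
  refine ⟨w, fun j => by by_cases h : τ j <;> simp [w, h], v, ?_, fun i hi => ?_, hv,
    Function.extend (clauseIdx n m) v 0, fun i => hinj.extend_apply _ _ _,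
    fun k hk => Function.extend_apply' _ _ _ fun ⟨i, hi⟩ => hk i hi.symm, hzero,
    fun k k' _ => by rw [hzero, hzero]⟩
  · calc (univ.filter fun i => v i ≠ 0).card ≤ Rᶜ.card := card_le_card hsupport
      _ = m - R.card := by rw [card_compl, Fintype.card_fin]
      _ ≤ m - r := by omega
  · simp only [v, hscore] at hi ⊢
    exact neg_ite_add_ite_eq_two_or_neg_two hi

/-- completeness of the reduction: if an assignment `τ` makes exactly one
literal true in each clause of a set `R` of at least `r` clauses, then there is a weight
vector `w ∈ {−1,1}^n` and a bonus vector `v` on the clause points with at most `m − r`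
nonzero values, each in `{−2, 2}`, such that every adjusted clause-point score is `0`;
extending by bonus `0` on the zero points, all adjusted scores are `0`, so they are
non-increasing along the ranking `π` of the reduction. -/
theorem stmt_1 (n m r : ℕ)
    (va vb : Fin m → Fin n) (sa sb : Fin m → ℝ)
    (hvab : ∀ i, va i ≠ vb i)
    (hsa : ∀ i, sa i = 1 ∨ sa i = -1) (hsb : ∀ i, sb i = 1 ∨ sb i = -1)
    (p : Fin m → Fin n → ℝ)
    (hp : ∀ i j, p i j =
      (if j = va i then sa i else 0) + (if j = vb i then sb i else 0))
    (τ : Fin n → Bool) (R : Finset (Fin m)) (hR : r ≤ R.card)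
    (hτ : ∀ i ∈ R, Xor' (litTrue (sa i) (τ (va i))) (litTrue (sb i) (τ (vb i))))
    (D : Fin ((m + 1) * n ^ 2 + m) → Fin n → ℝ)
    (hD1 : ∀ i, D (clauseIdx n m i) = p i)
    (hD2 : ∀ idx, (∀ i, idx ≠ clauseIdx n m i) → D idx = 0) :
    ∃ w : Fin n → ℝ, (∀ j, w j = 1 ∨ w j = -1) ∧
      ∃ v : Fin m → ℝ,
        (Finset.univ.filter fun i => v i ≠ 0).card ≤ m - r ∧
        (∀ i, v i ≠ 0 → v i = 2 ∨ v i = -2) ∧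
        (∀ i, (∑ j, w j * p i j) + v i = 0) ∧
        ∃ V : Fin ((m + 1) * n ^ 2 + m) → ℝ,
          (∀ i, V (clauseIdx n m i) = v i) ∧
          (∀ idx, (∀ i, idx ≠ clauseIdx n m i) → V idx = 0) ∧
          (∀ idx, (∑ j, w j * D idx j) + V idx = 0) ∧
          ∀ idx idx' : Fin ((m + 1) * n ^ 2 + m), idx ≤ idx' →
            (∑ j, w j * D idx' j) + V idx' ≤ (∑ j, w j * D idx j) + V idx :=
  stmt_1_general n m r va vb sa sb hsa hsb p hp τ R hR hτ D hD1 hD2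
end

section
/- Consider the reduction dataset built from a 2-CNF formula F over n variables with m clauses, where m < n². Suppose w ∈ ℝ^n and a bonus vector v on the dataset with fewer than n² nonzero values are such that the adjusted scores are non-increasing along the ranking π of the reduction. Then every clause point p_i that receives bonus 0 (v(p_i) = 0) satisfies ∑_{j=1}^n w_j·p_i[j] = 0. -/
/-- for the reduction dataset of a 2-CNF formula with `m < n²` clauses,
if a weight vector `w` and a bonus vector `V` with fewer than `n²` nonzero values
make the adjusted scores non-increasing along the ranking `π` of the reduction,
then every clause point receiving bonus `0` has linear score `0`. -/
theorem stmt_3 (n m : ℕ) (hm : m < n ^ 2)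
    (va vb : Fin m → Fin n) (sa sb : Fin m → ℝ)
    (hvab : ∀ i, va i ≠ vb i)
    (hsa : ∀ i, sa i = 1 ∨ sa i = -1) (hsb : ∀ i, sb i = 1 ∨ sb i = -1)
    (p : Fin m → Fin n → ℝ)
    (hp : ∀ i j, p i j =
      (if j = va i then sa i else 0) + (if j = vb i then sb i else 0))
    (D : Fin ((m + 1) * n ^ 2 + m) → Fin n → ℝ)
    (hD1 : ∀ i, D (clauseIdx n m i) = p i)
    (hD2 : ∀ idx, (∀ i, idx ≠ clauseIdx n m i) → D idx = 0)
    (w : Fin n → ℝ) (V : Fin ((m + 1) * n ^ 2 + m) → ℝ)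
    (hVcard : (Finset.univ.filter fun idx => V idx ≠ 0).card < n ^ 2)
    (hreal : ∀ idx idx' : Fin ((m + 1) * n ^ 2 + m), idx ≤ idx' →
      (∑ j, w j * D idx' j) + V idx' ≤ (∑ j, w j * D idx j) + V idx) :
    ∀ i : Fin m, V (clauseIdx n m i) = 0 → (∑ j, w j * p i j) = 0 := by
  intro i hVi
  have hn2 : 0 < n ^ 2 := lt_of_le_of_lt (Nat.zero_le m) hm
  have hi1 : (i : ℕ) + 1 ≤ m := i.isLt
  have hmul : ∀ a b : ℕ, a ≤ b → a * n ^ 2 ≤ b * n ^ 2 := fun a b hab =>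
    Nat.mul_le_mul_right _ hab
  have key : ∀ f : Fin (n ^ 2) → Fin ((m + 1) * n ^ 2 + m), Function.Injective f →
      ∃ t, V (f t) = 0 := by
    intro f hf
    by_contra h
    push_neg at h
    have hsub : (Finset.univ.image f) ⊆ (Finset.univ.filter fun idx => V idx ≠ 0) := by
      intro x hx
      simp only [Finset.mem_image, Finset.mem_univ, true_and] at hx
      obtain ⟨t, rfl⟩ := hx
      simp only [Finset.mem_filter, Finset.mem_univ, true_and]
      exact h t
    have hcard := Finset.card_le_card hsub
    rw [Finset.card_image_of_injective _ hf, Finset.card_univ, Fintype.card_fin] at hcard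
    omega
  have hzero : ∀ k : Fin ((m + 1) * n ^ 2 + m),
      (∀ i' : Fin m, (k : ℕ) ≠ ((i' : ℕ) + 1) * n ^ 2 + (i' : ℕ)) → D k = 0 := by
    intro k hk
    apply hD2
    intro i' he
    exact hk i' (by rw [he]; rfl)
  have hring1 : (i : ℕ) * n ^ 2 + n ^ 2 = ((i : ℕ) + 1) * n ^ 2 := by ring
  have hring2 : ((i : ℕ) + 1) * n ^ 2 + n ^ 2 = ((i : ℕ) + 2) * n ^ 2 := by ring
  have hnotcl : ∀ k : ℕ,
      (((i : ℕ) * n ^ 2 + (i : ℕ) ≤ k ∧ k < ((i : ℕ) + 1) * n ^ 2 + (i : ℕ)) ∨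
       (((i : ℕ) + 1) * n ^ 2 + (i : ℕ) < k ∧ k ≤ ((i : ℕ) + 1) * n ^ 2 + (i : ℕ) + n ^ 2)) →
      ∀ i' : Fin m, k ≠ ((i' : ℕ) + 1) * n ^ 2 + (i' : ℕ) := by
    intro k hk i'
    have hi'm : (i' : ℕ) < m := i'.isLt
    rcases lt_trichotomy (i' : ℕ) (i : ℕ) with h | h | h
    · have h1 : ((i' : ℕ) + 1) * n ^ 2 ≤ (i : ℕ) * n ^ 2 := hmul _ _ h
      omega
    · have h1 : ((i' : ℕ) + 1) * n ^ 2 = ((i : ℕ) + 1) * n ^ 2 := by rw [h]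
      omega
    · have h1 : ((i : ℕ) + 2) * n ^ 2 ≤ ((i' : ℕ) + 1) * n ^ 2 := hmul _ _ (by omega)
      omega
  have hbmem : ∀ t : Fin (n ^ 2), (i : ℕ) * n ^ 2 + (i : ℕ) + (t : ℕ) < (m + 1) * n ^ 2 + m := by
    intro t
    have h1 : ((i : ℕ) + 1) * n ^ 2 ≤ (m + 1) * n ^ 2 := hmul _ _ (by omega)
    have := t.isLt
    omega
  have hamem : ∀ t : Fin (n ^ 2),
      ((i : ℕ) + 1) * n ^ 2 + (i : ℕ) + 1 + (t : ℕ) < (m + 1) * n ^ 2 + m := by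
    intro t
    have h1 : ((i : ℕ) + 2) * n ^ 2 ≤ (m + 1) * n ^ 2 := hmul _ _ (by omega)
    have := t.isLt
    omega
  obtain ⟨t1, hV1⟩ := key (fun t => ⟨(i : ℕ) * n ^ 2 + (i : ℕ) + (t : ℕ), hbmem t⟩)
    (by intro a b hab; simp only [Fin.mk.injEq] at hab; exact Fin.ext (by omega))
  obtain ⟨t2, hV2⟩ := key (fun t => ⟨((i : ℕ) + 1) * n ^ 2 + (i : ℕ) + 1 + (t : ℕ), hamem t⟩)
    (by intro a b hab; simp only [Fin.mk.injEq] at hab; exact Fin.ext (by omega))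
  have ht1 := t1.isLt
  have ht2 := t2.isLt
  have hD1eq : D ⟨(i : ℕ) * n ^ 2 + (i : ℕ) + (t1 : ℕ), hbmem t1⟩ = 0 := by
    apply hzero
    intro i'
    show ((i : ℕ) * n ^ 2 + (i : ℕ) + (t1 : ℕ)) ≠ _
    exact hnotcl _ (Or.inl ⟨by omega, by omega⟩) i'
  have hD2eq : D ⟨((i : ℕ) + 1) * n ^ 2 + (i : ℕ) + 1 + (t2 : ℕ), hamem t2⟩ = 0 := by
    apply hzero
    intro i'
    show (((i : ℕ) + 1) * n ^ 2 + (i : ℕ) + 1 + (t2 : ℕ)) ≠ _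
    exact hnotcl _ (Or.inr ⟨by omega, by omega⟩) i'
  have hle1 : (⟨(i : ℕ) * n ^ 2 + (i : ℕ) + (t1 : ℕ), hbmem t1⟩ :
      Fin ((m + 1) * n ^ 2 + m)) ≤ clauseIdx n m i := by
    rw [Fin.le_def]
    show (i : ℕ) * n ^ 2 + (i : ℕ) + (t1 : ℕ) ≤ ((i : ℕ) + 1) * n ^ 2 + (i : ℕ)
    omega
  have hle2 : clauseIdx n m i ≤ (⟨((i : ℕ) + 1) * n ^ 2 + (i : ℕ) + 1 + (t2 : ℕ), hamem t2⟩ :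
      Fin ((m + 1) * n ^ 2 + m)) := by
    rw [Fin.le_def]
    show ((i : ℕ) + 1) * n ^ 2 + (i : ℕ) ≤ ((i : ℕ) + 1) * n ^ 2 + (i : ℕ) + 1 + (t2 : ℕ)
    omega
  have e1 := hreal _ _ hle1
  have e2 := hreal _ _ hle2
  rw [hD1eq, hV1, hD1 i, hVi] at e1
  rw [hD2eq, hV2, hD1 i, hVi] at e2
  simp only [Pi.zero_apply, mul_zero, Finset.sum_const_zero, add_zero] at e1 e2
  linarith
end

section
/- Let t_1,…,t_n ∈ ℝ^d and let π be a ranking. Suppose w* ∈ ℝ^d and v* ∈ ℝ^n with at most k nonzero entries realize π, i.e., the adjusted scores ⟨w*, t_{π(i)}⟩ + v*_{π(i)} strictly decrease in i. Then every w ∈ ℝ^d lying in the same cell as w*, i.e., satisfying for all i ≠ j that ⟨w, t_i − t_j⟩ > 0 if and only if ⟨w*, t_i − t_j⟩ > 0, also realizes π with at most k nonzero bonuses: there exists v ∈ ℝ^n whose set of nonzero entries is contained in that of v* such that ⟨w, t_{π(i)}⟩ + v_{π(i)} strictly decreases in i. -/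
private lemma strictAnti_cons' {n : ℕ} (x : ℝ) (g : Fin n → ℝ) (hx : ∀ j, g j < x)
    (hg : StrictAnti g) : StrictAnti (Fin.cons x g : Fin (n + 1) → ℝ) := by
  intro i j hij
  rcases Fin.eq_zero_or_eq_succ i with rfl | ⟨i', rfl⟩
  · rcases Fin.eq_zero_or_eq_succ j with rfl | ⟨j', rfl⟩
    · exact absurd hij (lt_irrefl _)
    · simpa using hx j'
  · rcases Fin.eq_zero_or_eq_succ j with rfl | ⟨j', rfl⟩
    · exact absurd hij (by simp [Fin.lt_def])
    · simpa using hg (by simpa [Fin.succ_lt_succ_iff] using hij)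

private lemma exists_strictAnti_ext : ∀ (n : ℕ) (f : Fin n → ℝ) (Z : Fin n → Prop)
    [DecidablePred Z] (B : ℝ),
    (∀ i j : Fin n, i < j → Z i → Z j → f j < f i) →
    (∀ i, Z i → f i < B) →
    ∃ h : Fin n → ℝ, StrictAnti h ∧ (∀ i, Z i → h i = f i) ∧ ∀ i, h i < B := by
  intro n
  induction n with
  | zero =>
    intro f Z _ B _ _
    exact ⟨f, fun i => i.elim0, fun i => i.elim0, fun i => i.elim0⟩
  | succ n ih =>
    intro f Z _ B hanti hB
    by_cases hZ0 : Z 0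
    · obtain ⟨h', H1, H2, H3⟩ := ih (fun i => f i.succ) (fun i => Z i.succ) (f 0)
        (fun i j hij hi hj => hanti i.succ j.succ (Fin.succ_lt_succ_iff.mpr hij) hi hj)
        (fun i hi => hanti 0 i.succ (Fin.succ_pos i) hZ0 hi)
      refine ⟨Fin.cons (f 0) h', strictAnti_cons' _ _ H3 H1, ?_, ?_⟩
      · intro i hi
        rcases Fin.eq_zero_or_eq_succ i with rfl | ⟨i', rfl⟩
        · simp
        · simpa using H2 i' hi
      · intro i
        rcases Fin.eq_zero_or_eq_succ i with rfl | ⟨i', rfl⟩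
        · simpa using hB 0 hZ0
        · simpa using lt_trans (H3 i') (hB 0 hZ0)
    · obtain ⟨h', H1, H2, H3⟩ := ih (fun i => f i.succ) (fun i => Z i.succ) B
        (fun i j hij hi hj => hanti i.succ j.succ (Fin.succ_lt_succ_iff.mpr hij) hi hj)
        (fun i hi => hB i.succ hi)
      set M : ℝ := (insert (B - 1) (Finset.univ.image h')).max' (by simp) with hM
      have hMB : M < B := by
        apply Finset.max'_lt_iff _ _ |>.mpr
        intro y hy
        simp only [Finset.mem_insert, Finset.mem_image] at hy
        rcases hy with rfl | ⟨j, _, rfl⟩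
        · linarith
        · exact H3 j
      have hMg : ∀ j, h' j ≤ M := by
        intro j
        apply Finset.le_max'
        simp only [Finset.mem_insert, Finset.mem_image]
        exact Or.inr ⟨j, Finset.mem_univ j, rfl⟩
      refine ⟨Fin.cons ((M + B) / 2) h',
        strictAnti_cons' _ _ (fun j => lt_of_le_of_lt (hMg j) (by linarith)) H1, ?_, ?_⟩
      · intro i hi
        rcases Fin.eq_zero_or_eq_succ i with rfl | ⟨i', rfl⟩
        · exact absurd hi hZ0
        · simpa using H2 i' hi
      · intro i
        rcases Fin.eq_zero_or_eq_succ i with rfl | ⟨i', rfl⟩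
        · simpa using by linarith
        · simpa using H3 i'

/-- if `(w*, v*)` realizes `π` with at most `k` nonzero bonuses, then any
`w` lying in the same cell of the arrangement of comparison hyperplanes as `w*` also
realizes `π` with at most `k` nonzero bonuses, via a bonus vector `v` whose set of
nonzero entries is contained in that of `v*`. -/
theorem stmt_9 (n d k : ℕ) (t : Fin n → Fin d → ℝ) (π : Equiv.Perm (Fin n))
    (wstar : Fin d → ℝ) (vstar : Fin n → ℝ)
    (hk : (Finset.univ.filter fun i => vstar i ≠ 0).card ≤ k)
    (hreal : ∀ i j : Fin n, i < j →
      (∑ a, wstar a * t (π j) a) + vstar (π j) <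
        (∑ a, wstar a * t (π i) a) + vstar (π i))
    (w : Fin d → ℝ)
    (hcell : ∀ i j : Fin n, i ≠ j →
      ((0 < ∑ a, w a * (t i a - t j a)) ↔ (0 < ∑ a, wstar a * (t i a - t j a)))) :
    ∃ v : Fin n → ℝ, (∀ i : Fin n, v i ≠ 0 → vstar i ≠ 0) ∧
      (Finset.univ.filter fun i => v i ≠ 0).card ≤ k ∧
      ∀ i j : Fin n, i < j →
        (∑ a, w a * t (π j) a) + v (π j) < (∑ a, w a * t (π i) a) + v (π i) := by
  classical
  have key : ∀ i j : Fin n,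
      (∑ a, wstar a * t i a) < (∑ a, wstar a * t j a) ↔
      (∑ a, w a * t i a) < (∑ a, w a * t j a) := by
    intro i j
    by_cases hij : j = i
    · subst hij; simp
    · have hsum : ∀ u : Fin d → ℝ,
          (∑ a, u a * (t j a - t i a)) = (∑ a, u a * t j a) - ∑ a, u a * t i a := by
        intro u
        simp [mul_sub, Finset.sum_sub_distrib]
      have := hcell j i hij
      rw [hsum, hsum, sub_pos, sub_pos] at this
      exact this.symm
  set f : Fin n → ℝ := fun i => ∑ a, w a * t (π i) a with hf
  obtain ⟨h, hA, hmatch, -⟩ := exists_strictAnti_ext n f (fun i => vstar (π i) = 0)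
      (1 + ∑ i, |f i|)
      (by
        intro i j hij hi hj
        have := hreal i j hij
        rw [hi, hj, add_zero, add_zero] at this
        exact (key (π j) (π i)).mp this)
      (by
        intro i _
        have h1 : |f i| ≤ ∑ j, |f j| :=
          Finset.single_le_sum (f := fun j => |f j|) (fun j _ => abs_nonneg _)
            (Finset.mem_univ i)
        have h2 : f i ≤ |f i| := le_abs_self _
        linarith)
  refine ⟨fun p => h (π.symm p) - ∑ a, w a * t p a, ?_, ?_, ?_⟩
  · intro p hvp hvs
    apply hvp
    have hz : vstar (π (π.symm p)) = 0 := by rw [Equiv.apply_symm_apply]; exact hvs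
    show h (π.symm p) - (∑ a, w a * t p a) = 0
    rw [hmatch (π.symm p) hz]
    simp [hf, Equiv.apply_symm_apply]
  · refine le_trans (Finset.card_le_card ?_) hk
    intro p hp
    simp only [Finset.mem_filter, Finset.mem_univ, true_and] at hp ⊢
    intro hvs
    apply hp
    have hz : vstar (π (π.symm p)) = 0 := by rw [Equiv.apply_symm_apply]; exact hvs
    rw [hmatch (π.symm p) hz]
    simp [hf, Equiv.apply_symm_apply]
  · intro i j hij
    have := hA hij
    simp only [Equiv.symm_apply_apply]
    have hfi : f i = ∑ a, w a * t (π i) a := rfl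
    have hfj : f j = ∑ a, w a * t (π j) a := rfl
    linarith [hA hij]
end

section
/- Let d ≥ 1 and let H_1, …, H_m be affine hyperplanes in ℝ^d (affine subspaces of dimension d − 1). Then the complement ℝ^d \ (H_1 ∪ ⋯ ∪ H_m) has at most ∑_{i=0}^{d} binom(m, i) connected components. -/
/-!
Record for each point of the complement the set of affine functions that are positive there.
Two points with the same sign pattern are joined by a segment avoiding every hyperplane, so the
number of regions is at most the number of sign patterns. The family of sign patterns has VC
dimension at most `d`: if it shattered `d + 1` hyperplanes, a linear relation `∑ cᵢ fᵢ = const`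
among their affine functions would be positive at a point realising the pattern `{cᵢ > 0}` and
negative at one realising `{cᵢ < 0}`. The Sauer–Shelah lemma then bounds the number of patterns.
-/

open Finset Function Module

lemma Function.Surjective.finite_and_natCard_le_of_factorsThrough {α β γ : Type*} {q : α → β}
    (hq : Surjective q) {g : α → γ} (hqg : q.FactorsThrough g) {s : Finset γ}
    (hg : ∀ a, g a ∈ s) : Finite β ∧ Nat.card β ≤ #s := by
  let e : β → s := fun b => ⟨g (surjInv hq b), hg _⟩
  have he : Injective e := fun b b' hbb' => by
    simpa only [surjInv_eq hq] using hqg (Subtype.ext_iff.1 hbb')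
  exact ⟨Finite.of_injective e he, (Nat.card_le_card_of_injective e he).trans_eq (by simp)⟩

lemma Finset.card_le_sum_choose_of_vcDim_le {α : Type*} [Fintype α] [DecidableEq α]
    {𝒜 : Finset (Finset α)} {n : ℕ} (h : 𝒜.vcDim ≤ n) :
    #𝒜 ≤ ∑ k ∈ range (n + 1), (Fintype.card α).choose k :=
  calc #𝒜 ≤ #𝒜.shatterer := card_le_card_shatterer 𝒜
    _ ≤ ∑ k ∈ Iic 𝒜.vcDim, (Fintype.card α).choose k := card_shatterer_le_sum_vcDim
    _ ≤ _ := sum_le_sum_of_subset fun k hk => by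
      rw [mem_range]
      rw [mem_Iic] at hk
      omega

lemma mul_nonneg_of_pos_iff_pos {α : Type*} [Ring α] [LinearOrder α] [IsStrictOrderedRing α]
    {a b : α} (hb : b ≠ 0) (h : 0 < a ↔ 0 < b) : 0 ≤ a * b := by
  rcases lt_or_gt_of_ne hb with hb | hb
  · exact mul_nonneg_of_nonpos_of_nonpos (not_lt.1 fun ha => hb.not_gt (h.1 ha)) hb.le
  · exact mul_nonneg (h.2 hb).le hb.le

lemma segment_subset_compl_zero_of_pos_iff_pos {𝕜 : Type*} [Field 𝕜] [LinearOrder 𝕜]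
    [IsStrictOrderedRing 𝕜] {a b : 𝕜} (ha : a ≠ 0) (hb : b ≠ 0) (h : 0 < a ↔ 0 < b) :
    segment 𝕜 a b ⊆ {0}ᶜ := by
  rcases lt_or_gt_of_ne ha with ha | ha
  · have hb : b < 0 := hb.lt_of_le (not_lt.1 (mt h.2 ha.not_gt))
    exact ((convex_Iio 0).segment_subset ha hb).trans fun x hx => ne_of_lt hx
  · exact ((convex_Ioi 0).segment_subset ha (h.1 ha)).trans fun x hx => ne_of_gt hx

namespace AffineArrangement

variable {ι E : Type*} [AddCommGroup E] [Module ℝ E] (f : ι → E →ᵃ[ℝ] ℝ)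

def compl : Set E := {x | ∀ i, f i x ≠ 0}

variable [Fintype ι]

noncomputable def positiveSet (x : E) : Finset ι := {i | 0 < f i x}

open Classical in
noncomputable def signPatterns : Finset (Finset ι) :=
  {s | ∃ x ∈ compl f, positiveSet f x = s}

variable {f}

lemma mem_signPatterns {s : Finset ι} :
    s ∈ signPatterns f ↔ ∃ x ∈ compl f, positiveSet f x = s := by
  simp [signPatterns]

lemma segment_subset_compl {x y : E} (hx : x ∈ compl f) (hy : y ∈ compl f)
    (hxy : positiveSet f x = positiveSet f y) : segment ℝ x y ⊆ compl f := by
  intro z hz i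
  have hi : 0 < f i x ↔ 0 < f i y := by simpa [positiveSet] using congr(i ∈ $hxy)
  exact segment_subset_compl_zero_of_pos_iff_pos (hx i) (hy i) hi
    (image_segment ℝ (f i) x y ▸ ⟨z, hz, rfl⟩)

lemma exists_sum_mul_pos_of_shatters [DecidableEq ι] {t : Finset ι}
    (ht : (signPatterns f).Shatters t) (c : ι → ℝ) {i₀ : ι} (hi₀ : i₀ ∈ t) (hc : c i₀ ≠ 0) :
    ∃ x, 0 < ∑ i ∈ t, c i * f i x := by
  obtain ⟨u, hu, htu⟩ := ht (filter_subset (fun i => 0 < c i) t)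
  obtain ⟨x, hx, rfl⟩ := mem_signPatterns.1 hu
  have hsign : ∀ i ∈ t, 0 < c i ↔ 0 < f i x := fun i hi => by
    simpa [hi, positiveSet] using congr(i ∈ $htu).symm
  refine ⟨x, sum_pos' (fun i hi => mul_nonneg_of_pos_iff_pos (hx i) (hsign i hi)) ⟨i₀, hi₀, ?_⟩⟩
  exact (mul_nonneg_of_pos_iff_pos (hx i₀) (hsign i₀ hi₀)).lt_of_ne' (mul_ne_zero hc (hx i₀))

omit [Fintype ι] in
lemma sum_mul_apply_eq_of_sum_smul_linear_eq_zero {t : Finset ι} {c : ι → ℝ}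
    (h : ∑ i ∈ t, c i • (f i).linear = 0) (x y : E) :
    ∑ i ∈ t, c i * f i x = ∑ i ∈ t, c i * f i y := by
  rw [← sub_eq_zero, ← sum_sub_distrib]
  have := congr($h (x -ᵥ y))
  simp only [LinearMap.sum_apply, LinearMap.smul_apply, AffineMap.linearMap_vsub] at this
  simpa [mul_sub] using this

lemma card_le_finrank_of_shatters [DecidableEq ι] [FiniteDimensional ℝ E] {t : Finset ι}
    (ht : (signPatterns f).Shatters t) : #t ≤ finrank ℝ E := by
  by_contra! hlt
  have hdep : ¬ LinearIndepOn ℝ (fun i => (f i).linear) (t : Set ι) := fun hli => by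
    have := hli.fintype_card_le_finrank
    simp [Subspace.dual_finrank_eq] at this
    omega
  simp only [linearIndepOn_finset_iff, not_forall] at hdep
  obtain ⟨c, hc, i₀, hi₀, hci₀⟩ := hdep
  obtain ⟨x, hx⟩ := exists_sum_mul_pos_of_shatters ht c hi₀ hci₀
  obtain ⟨y, hy⟩ := exists_sum_mul_pos_of_shatters ht (-c) hi₀ (neg_ne_zero.2 hci₀)
  simp only [Pi.neg_apply, neg_mul, sum_neg_distrib] at hy
  linarith [sum_mul_apply_eq_of_sum_smul_linear_eq_zero hc x y]

lemma vcDim_signPatterns_le [DecidableEq ι] [FiniteDimensional ℝ E] :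
    (signPatterns f).vcDim ≤ finrank ℝ E :=
  Finset.sup_le fun _ ht => card_le_finrank_of_shatters (mem_shatterer.1 ht)

variable [TopologicalSpace E] [IsTopologicalAddGroup E] [ContinuousSMul ℝ E]

lemma factorsThrough_positiveSet :
    FactorsThrough (ConnectedComponents.mk : compl f → _) (fun x => positiveSet f x) := by
  rintro ⟨x, hx⟩ ⟨y, hy⟩ hxy
  have := (JoinedIn.of_segment_subset (segment_subset_compl hx hy hxy)).joined_subtype
  exact ConnectedComponents.coe_eq_coe'.2
    (pathComponent_subset_component _ (mem_pathComponent_iff.2 this.symm))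

theorem finite_connectedComponents_compl_and_card_le [FiniteDimensional ℝ E] :
    Finite (ConnectedComponents (compl f)) ∧
      Nat.card (ConnectedComponents (compl f)) ≤
        ∑ k ∈ range (finrank ℝ E + 1), (Fintype.card ι).choose k := by
  classical
  obtain ⟨hfin, hcard⟩ := ConnectedComponents.surjective_coe.finite_and_natCard_le_of_factorsThrough
    factorsThrough_positiveSet fun x : compl f => mem_signPatterns.2 ⟨(x : E), x.2, rfl⟩
  exact ⟨hfin, hcard.trans (card_le_sum_choose_of_vcDim_le vcDim_signPatterns_le)⟩

end AffineArrangement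

theorem stmt_14_general (d m : ℕ)
    (H : Fin m → Set (Fin d → ℝ))
    (hH : ∀ i, ∃ (a : Fin d → ℝ) (c : ℝ), a ≠ 0 ∧
      H i = {x : Fin d → ℝ | (∑ j, a j * x j) = c}) :
    Finite (ConnectedComponents {x : Fin d → ℝ | ∀ i, x ∉ H i}) ∧
      Nat.card (ConnectedComponents {x : Fin d → ℝ | ∀ i, x ∉ H i}) ≤
        ∑ i ∈ Finset.range (d + 1), m.choose i := by
  choose a c _ hHac using hH
  let f : Fin m → (Fin d → ℝ) →ᵃ[ℝ] ℝ := fun i =>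
    (dotProductBilin ℝ ℝ (a i)).toAffineMap - AffineMap.const ℝ _ (c i)
  have hcompl : {x : Fin d → ℝ | ∀ i, x ∉ H i} = AffineArrangement.compl f := by
    ext x
    simp [hHac, f, AffineArrangement.compl, dotProduct, sub_eq_zero]
  rw [hcompl]
  simpa using AffineArrangement.finite_connectedComponents_compl_and_card_le (f := f)

/-- an arrangement of `m` affine hyperplanes in `ℝ^d` (each of the form
`{x | ∑ j, a j * x j = c}` with `a ≠ 0`) has at most `∑_{i=0}^{d} C(m, i)` regions,
i.e. the complement of their union has at most that many connected components. -/
theorem stmt_14 (d m : ℕ) (hd : 1 ≤ d)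
    (H : Fin m → Set (Fin d → ℝ))
    (hH : ∀ i, ∃ (a : Fin d → ℝ) (c : ℝ), a ≠ 0 ∧
      H i = {x : Fin d → ℝ | (∑ j, a j * x j) = c}) :
    Finite (ConnectedComponents {x : Fin d → ℝ | ∀ i, x ∉ H i}) ∧
      Nat.card (ConnectedComponents {x : Fin d → ℝ | ∀ i, x ∉ H i}) ≤
        ∑ i ∈ Finset.range (d + 1), m.choose i :=
  stmt_14_general d m H hH
end

section
/- Let d ≥ 1, let m ≥ 1, and let H_1, …, H_m be linear hyperplanes in ℝ^d, i.e., each H_i is a (d−1)-dimensional linear subspace passing through the origin. Then the complement ℝ^d \ (H_1 ∪ ⋯ ∪ H_m) has at most 2·∑_{i=0}^{d−1} binom(m−1, i) connected components. -/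
open Module Set

section Cells

variable {V : Type} [AddCommGroup V] [Module ℝ V]

def myCell {m : ℕ} (f : Fin m → V →ₗ[ℝ] ℝ) (s : Fin m → Bool) : Set V :=
  {x | ∀ i, if s i then 0 < f i x else f i x < 0}

def mySigns {m : ℕ} (f : Fin m → V →ₗ[ℝ] ℝ) : Set (Fin m → Bool) :=
  {s | (myCell f s).Nonempty}

lemma convex_myCell {m : ℕ} (f : Fin m → V →ₗ[ℝ] ℝ) (s : Fin m → Bool) :
    Convex ℝ (myCell f s) := by
  have h : myCell f s = ⋂ i, {x : V | if s i then 0 < f i x else f i x < 0} := by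
    ext x; simp [myCell, Set.mem_iInter]
  rw [h]
  refine convex_iInter fun i => ?_
  cases hs : s i
  · simpa [hs] using convex_halfSpace_lt (LinearMap.isLinear (f i)) (0:ℝ)
  · simpa [hs] using convex_halfSpace_gt (LinearMap.isLinear (f i)) (0:ℝ)

lemma mySigns_of_subsingleton {m : ℕ} (hm : 1 ≤ m) (f : Fin m → V →ₗ[ℝ] ℝ)
    (hV : Subsingleton V) : mySigns f = ∅ := by
  ext s
  simp only [mySigns, Set.mem_setOf_eq, Set.mem_empty_iff_false, iff_false]
  rintro ⟨x, hx⟩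
  have hx0 : x = 0 := Subsingleton.elim x 0
  have h := hx ⟨0, hm⟩
  rcases hs : s ⟨0, hm⟩ <;> rw [hs] at h <;> simp [hx0] at h

lemma init_mem_mySigns {n : ℕ} (f : Fin (n + 1) → V →ₗ[ℝ] ℝ) {s : Fin (n + 1) → Bool}
    (hs : s ∈ mySigns f) : Fin.init s ∈ mySigns (fun i => f i.castSucc) := by
  obtain ⟨x, hx⟩ := hs
  exact ⟨x, fun i => hx i.castSucc⟩

end Cells

lemma sum_choose_pascal (k d : ℕ) :
    ∑ i ∈ Finset.range (d + 1), (k + 1).choose i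
      = ∑ i ∈ Finset.range (d + 1), k.choose i + ∑ i ∈ Finset.range d, k.choose i := by
  induction d with
  | zero => simp
  | succ e ih =>
    have h : (k + 1).choose (e + 1) = k.choose e + k.choose (e + 1) := Nat.choose_succ_succ k e
    rw [Finset.sum_range_succ, ih, Finset.sum_range_succ (f := k.choose) (n := e + 1),
      Finset.sum_range_succ (f := k.choose) (n := e)]
    omega

lemma sum_choose_zero (d : ℕ) : ∑ i ∈ Finset.range (d + 1), Nat.choose 0 i = 1 := by
  induction d with
  | zero => simp
  | succ e ih => rw [Finset.sum_range_succ, ih]; simp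

lemma key_bound : ∀ m : ℕ, 1 ≤ m → ∀ (d : ℕ) (V : Type) [AddCommGroup V] [Module ℝ V]
    [FiniteDimensional ℝ V], finrank ℝ V ≤ d → ∀ f : Fin m → V →ₗ[ℝ] ℝ,
    (mySigns f).ncard ≤ 2 * ∑ i ∈ Finset.range d, (m - 1).choose i := by
  intro m hm
  induction m, hm using Nat.le_induction with
  | base =>
    intro d V _ _ _ hdim f
    match d with
    | 0 =>
      have hsub : Subsingleton V := by
        rw [← finrank_zero_iff (R := ℝ)]
        omega
      rw [mySigns_of_subsingleton le_rfl f hsub]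
      simp
    | e + 1 =>
      have h1 : (mySigns f).ncard ≤ Nat.card (Fin 1 → Bool) := by
        rw [← Set.ncard_univ]
        exact Set.ncard_le_ncard (Set.subset_univ _) Set.finite_univ
      have h2 : Nat.card (Fin 1 → Bool) = 2 := by
        simp [Nat.card_eq_fintype_card]
      rw [show (1 - 1 : ℕ) = 0 from rfl, sum_choose_zero]
      omega
  | succ n hn ih =>
    intro d V _ _ _ hdim f
    match d with
    | 0 =>
      have hsub : Subsingleton V := by
        rw [← finrank_zero_iff (R := ℝ)]
        omega
      rw [mySigns_of_subsingleton (by omega) f hsub]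
      simp
    | e + 1 =>
    classical
    set g : V →ₗ[ℝ] ℝ := f (Fin.last n) with hg
    by_cases hg0 : g = 0
    · have hempty : mySigns f = ∅ := by
        ext s
        simp only [mySigns, Set.mem_setOf_eq, Set.mem_empty_iff_false, iff_false]
        rintro ⟨x, hx⟩
        have h := hx (Fin.last n)
        rcases hs : s (Fin.last n) <;> rw [hs] at h <;> simp [← hg, hg0] at h
      rw [hempty]; simp
    -- the deleted arrangement
    set f' : Fin n → V →ₗ[ℝ] ℝ := fun i => f i.castSucc with hf'
    -- the restricted arrangement on ker g
    set W : Submodule ℝ V := LinearMap.ker g with hW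
    set f'' : Fin n → W →ₗ[ℝ] ℝ := fun i => (f i.castSucc).comp W.subtype with hf''
    have hWdim : finrank ℝ W ≤ e := by
      have hr : finrank ℝ (LinearMap.range g) + finrank ℝ W = finrank ℝ V :=
        LinearMap.finrank_range_add_finrank_ker g
      have hrange : LinearMap.range g = ⊤ := by
        rcases (by simpa [hg, DFunLike.ext_iff] using hg0 :
            ¬ ∀ x, g x = 0) with h
        push_neg at h
        obtain ⟨x, hx⟩ := h
        refine LinearMap.range_eq_top.mpr fun c => ⟨(c / g x) • x, ?_⟩
        simp [div_mul_cancel₀, hx]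
      rw [hrange] at hr
      simp [finrank_top] at hr
      omega
    -- the doubled sign vectors
    set D : Set (Fin n → Bool) :=
      {s' | Fin.snoc s' true ∈ mySigns f ∧ Fin.snoc s' false ∈ mySigns f} with hD
    -- Claim B : D ⊆ mySigns f''
    have hDsub : D ⊆ mySigns f'' := by
      rintro s' ⟨⟨x, hx⟩, ⟨y, hy⟩⟩
      have hgx : 0 < g x := by
        have h := hx (Fin.last n); rwa [Fin.snoc_last, if_pos rfl] at h
      have hgy : g y < 0 := by
        have h := hy (Fin.last n); rwa [Fin.snoc_last, if_neg (by simp)] at h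
      have hx' : x ∈ myCell f' s' := fun i => by
        have h := hx i.castSucc; rwa [Fin.snoc_castSucc] at h
      have hy' : y ∈ myCell f' s' := fun i => by
        have h := hy i.castSucc; rwa [Fin.snoc_castSucc] at h
      have hc : (0:ℝ) < g x - g y := by linarith
      obtain ⟨t, ht0, ht1, htc⟩ : ∃ t : ℝ, 0 ≤ t ∧ t ≤ 1 ∧ t * (g x - g y) = g x :=
        ⟨g x / (g x - g y), le_of_lt (div_pos hgx hc), by rw [div_le_one hc]; linarith,
          div_mul_cancel₀ _ (ne_of_gt hc)⟩
      have hz := convex_myCell f' s' hx' hy' (a := 1 - t) (b := t) (by linarith) ht0 (by ring)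
      have hzker : (1 - t) • x + t • y ∈ W := by
        rw [hW, LinearMap.mem_ker, map_add, map_smul, map_smul, smul_eq_mul, smul_eq_mul]
        nlinarith [htc]
      exact ⟨⟨_, hzker⟩, fun i => hz i⟩
    -- Claim A : |S| ≤ |S'| + |D|
    have hA : (mySigns f).ncard ≤ (mySigns f').ncard + D.ncard := by
      have hinj : ∃ φ : ↥(mySigns f) → ↥(mySigns f') ⊕ ↥D, Function.Injective φ := by
        refine ⟨fun s =>
          if h : s.1 (Fin.last n) = false ∧ Fin.snoc (Fin.init s.1) true ∈ mySigns f
          then Sum.inr ⟨Fin.init s.1, ⟨h.2, by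
            rw [show (false : Bool) = s.1 (Fin.last n) from h.1.symm, Fin.snoc_init_self]
            exact s.2⟩⟩
          else Sum.inl ⟨Fin.init s.1, init_mem_mySigns f s.2⟩, ?_⟩
        rintro ⟨s, hs⟩ ⟨u, hu⟩ hst
        simp only at hst
        by_cases h1 : s (Fin.last n) = false ∧ Fin.snoc (Fin.init s) true ∈ mySigns f <;>
          by_cases h2 : u (Fin.last n) = false ∧ Fin.snoc (Fin.init u) true ∈ mySigns f
        · rw [dif_pos h1, dif_pos h2] at hst
          simp only [Sum.inr.injEq, Subtype.mk.injEq] at hst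
          have : s = u := by
            rw [← Fin.snoc_init_self s, ← Fin.snoc_init_self u, hst, h1.1, h2.1]
          simp [this]
        · rw [dif_pos h1, dif_neg h2] at hst
          exact absurd hst (by simp)
        · rw [dif_neg h1, dif_pos h2] at hst
          exact absurd hst (by simp)
        · rw [dif_neg h1, dif_neg h2] at hst
          simp only [Sum.inl.injEq, Subtype.mk.injEq] at hst
          have hlast : s (Fin.last n) = u (Fin.last n) := by
            by_contra hne
            rcases Bool.eq_false_or_eq_true (s (Fin.last n)) with hsl | hsl <;>
              rcases Bool.eq_false_or_eq_true (u (Fin.last n)) with hul | hul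
            · exact hne (hsl.trans hul.symm)
            · exact h2 ⟨hul, by
                rw [← hst, show (true : Bool) = s (Fin.last n) from hsl.symm,
                  Fin.snoc_init_self]; exact hs⟩
            · exact h1 ⟨hsl, by
                rw [hst, show (true : Bool) = u (Fin.last n) from hul.symm,
                  Fin.snoc_init_self]; exact hu⟩
            · exact hne (hsl.trans hul.symm)
          have : s = u := by
            rw [← Fin.snoc_init_self s, ← Fin.snoc_init_self u, hst, hlast]
          simp [this]
      obtain ⟨φ, hφ⟩ := hinj
      have := Nat.card_le_card_of_injective φ hφ
      rwa [Nat.card_sum, Nat.card_coe_set_eq, Nat.card_coe_set_eq,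
        Nat.card_coe_set_eq] at this
    have hB : D.ncard ≤ (mySigns f'').ncard :=
      Set.ncard_le_ncard hDsub (Set.toFinite _)
    have h1 : (mySigns f').ncard ≤ 2 * ∑ i ∈ Finset.range (e + 1), (n - 1).choose i :=
      ih (e + 1) V hdim f'
    have h2 : (mySigns f'').ncard ≤ 2 * ∑ i ∈ Finset.range e, (n - 1).choose i :=
      ih e W hWdim f''
    have hpas := sum_choose_pascal (n - 1) e
    have hn1 : n - 1 + 1 = n := by omega
    rw [hn1] at hpas
    have : 2 * ∑ i ∈ Finset.range (e + 1), (n + 1 - 1).choose i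
        = 2 * ∑ i ∈ Finset.range (e + 1), (n - 1).choose i
          + 2 * ∑ i ∈ Finset.range e, (n - 1).choose i := by
      rw [show n + 1 - 1 = n from rfl, hpas]; ring
    omega

/-- a central arrangement of `m ≥ 1` linear hyperplanes in `ℝ^d` (each of
the form `{x | ∑ j, a j * x j = 0}` with `a ≠ 0`, a `(d−1)`-dimensional linear subspace
through the origin) has at most `2·∑_{i=0}^{d−1} C(m−1, i)` regions, i.e. the complement
of the union of the hyperplanes has at most that many connected components. -/
theorem stmt_15 (d m : ℕ) (hd : 1 ≤ d) (hm : 1 ≤ m)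
    (H : Fin m → Set (Fin d → ℝ))
    (hH : ∀ i, ∃ a : Fin d → ℝ, a ≠ 0 ∧
      H i = {x : Fin d → ℝ | (∑ j, a j * x j) = 0}) :
    Finite (ConnectedComponents {x : Fin d → ℝ | ∀ i, x ∉ H i}) ∧
      Nat.card (ConnectedComponents {x : Fin d → ℝ | ∀ i, x ∉ H i}) ≤
        2 * ∑ i ∈ Finset.range d, (m - 1).choose i := by
  classical
  choose a ha0 haH using hH
  set f : Fin m → (Fin d → ℝ) →ₗ[ℝ] ℝ :=
    fun i => ∑ j, a i j • (LinearMap.proj j : ((Fin d → ℝ) →ₗ[ℝ] ℝ)) with hfdef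
  have hfapply : ∀ i x, f i x = ∑ j, a i j * x j := by
    intro i x
    simp [hfdef, LinearMap.proj_apply, smul_eq_mul]
  have hHf : ∀ i (x : Fin d → ℝ), x ∉ H i ↔ f i x ≠ 0 := by
    intro i x
    rw [haH i, hfapply]
    simp
  set Ω : Set (Fin d → ℝ) := {x | ∀ i, x ∉ H i} with hΩ
  have hΩf : ∀ x : Fin d → ℝ, x ∈ Ω ↔ ∀ i, f i x ≠ 0 := by
    intro x
    simp only [hΩ, Set.mem_setOf_eq]
    exact forall_congr' fun i => hHf i x
  have hfc : ∀ i, Continuous (f i) := fun i => (f i).continuous_of_finiteDimensional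
  -- the sign map
  set σ : Ω → (Fin m → Bool) := fun x i => decide (0 < f i x.1) with hσ
  have hmem : ∀ x : Ω, (x : Fin d → ℝ) ∈ myCell f (σ x) := by
    intro x i
    have hne : f i x.1 ≠ 0 := (hΩf x.1).1 x.2 i
    by_cases h : 0 < f i x.1
    · simp [hσ, h]
    · simp only [hσ, h, decide_eq_false h, if_false]
      exact lt_of_le_of_ne (not_lt.1 h) hne
  have hσcont : Continuous σ := by
    refine continuous_pi fun i => ?_
    rw [continuous_discrete_rng]
    intro b
    cases b
    · have hset : (fun x : Ω => decide (0 < f i x.1)) ⁻¹' {false}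
          = Subtype.val ⁻¹' {y : Fin d → ℝ | f i y < 0} := by
        ext x
        have hne : f i x.1 ≠ 0 := (hΩf x.1).1 x.2 i
        simp only [Set.mem_preimage, Set.mem_singleton_iff, decide_eq_false_iff_not, not_lt,
          Set.mem_setOf_eq]
        exact ⟨fun h => lt_of_le_of_ne h hne, le_of_lt⟩
      rw [hset]
      exact (isOpen_lt (hfc i) continuous_const).preimage continuous_subtype_val
    · have hset : (fun x : Ω => decide (0 < f i x.1)) ⁻¹' {true}
          = Subtype.val ⁻¹' {y : Fin d → ℝ | 0 < f i y} := by
        ext x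
        simp
      rw [hset]
      exact (isOpen_lt continuous_const (hfc i)).preimage continuous_subtype_val
  -- σ is constant on connected components, and the induced map is injective into mySigns f
  set θ : ConnectedComponents Ω → (Fin m → Bool) := hσcont.connectedComponentsLift with hθ
  have hθcoe : ∀ x : Ω, θ x = σ x := fun x => rfl
  have hcellΩ : ∀ s, myCell f s ⊆ Ω := by
    intro s z hz
    rw [hΩf]
    intro i
    have h := hz i
    rcases hs : s i <;> rw [hs] at h <;> simp at h
    · exact ne_of_lt h
    · exact ne_of_gt h
  have hinj : Function.Injective θ := by
    intro c₁ c₂ hc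
    obtain ⟨x, rfl⟩ := ConnectedComponents.surjective_coe c₁
    obtain ⟨y, rfl⟩ := ConnectedComponents.surjective_coe c₂
    rw [hθcoe, hθcoe] at hc
    -- x and y lie in the same convex cell
    have hx : (x : Fin d → ℝ) ∈ myCell f (σ x) := hmem x
    have hy : (y : Fin d → ℝ) ∈ myCell f (σ x) := by rw [hc]; exact hmem y
    set T : Set Ω := Subtype.val ⁻¹' myCell f (σ x) with hT
    have hTpc : IsPreconnected T := by
      rw [← Topology.IsInducing.subtypeVal.isPreconnected_image]
      have himg : Subtype.val '' T = myCell f (σ x) := by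
        rw [hT, Subtype.image_preimage_coe]
        exact Set.inter_eq_self_of_subset_right (hcellΩ (σ x))
      rw [himg]
      exact (convex_myCell f (σ x)).isPreconnected
    have hxT : x ∈ T := hx
    have hyT : y ∈ T := hy
    have := hTpc.subset_connectedComponent hxT
    exact (ConnectedComponents.coe_eq_coe'.mpr (this hyT)).symm
  -- conclude
  have hθmem : ∀ c, θ c ∈ mySigns f := by
    intro c
    obtain ⟨x, rfl⟩ := ConnectedComponents.surjective_coe c
    rw [hθcoe]
    exact ⟨x.1, hmem x⟩
  set θ' : ConnectedComponents Ω → ↥(mySigns f) := fun c => ⟨θ c, hθmem c⟩ with hθ'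
  have hinj' : Function.Injective θ' := fun c₁ c₂ h =>
    hinj (congrArg Subtype.val h)
  have hfin : Finite (ConnectedComponents Ω) := Finite.of_injective θ' hinj'
  refine ⟨hfin, ?_⟩
  have hcard : Nat.card (ConnectedComponents Ω) ≤ Nat.card ↥(mySigns f) :=
    Nat.card_le_card_of_injective θ' hinj'
  have hkey : (mySigns f).ncard ≤ 2 * ∑ i ∈ Finset.range d, (m - 1).choose i :=
    key_bound m hm d (Fin d → ℝ) (le_of_eq (Module.finrank_fin_fun ℝ)) f
  rw [Nat.card_coe_set_eq] at hcard
  omega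
end
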